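/- If (X, D(0), D(1)) is independent of Z, P(Z=1) > 0, and monotonicity holds (D(1) ≥ D(0) a.s.), then E[X | D = 0, Z = 1] = E[X | D(0) = D(1) = 0], provided P(D(0)=D(1)=0) > 0 and X is integrable. -/

import Mathlib

open MeasureTheory ProbabilityTheory

/-! Under monotonicity, the units with `D = 0` and `Z = 1` are a.e. exactly the never-takers
with `Z = 1`. Since `Z` is independent of `(X, D0, D1)`, conditioning the never-takers further on
`{Z = 1}` multiplies both their probability and the integral of `X` over them by `P(Z = 1)`,
which cancels in the conditional expectation. -/

namespace ProbabilityTheory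

variable {Ω β γ E : Type*} [MeasurableSpace Ω] [MeasurableSpace β] [MeasurableSpace γ]
  [NormedAddCommGroup E] [NormedSpace ℝ E] {μ : Measure Ω} {s t : Set Ω}

lemma cond_congr_set (h : s =ᵐ[μ] t) : μ[|s] = μ[|t] := by
  rw [cond, cond, measure_congr h, Measure.restrict_congr_set h]

lemma integral_cond (f : Ω → E) : ∫ ω, f ω ∂μ[|s] = (μ.real s)⁻¹ • ∫ ω in s, f ω ∂μ := by
  rw [cond, integral_smul_measure, ENNReal.toReal_inv, measureReal_def]

variable {Y : Ω → β} {Z : Ω → γ} {S : Set β} {T : Set γ}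

lemma IndepFun.setIntegral_preimage_inter_preimage (hYZ : IndepFun Y Z μ) (hY : Measurable Y)
    (hZ : Measurable Z) (hS : MeasurableSet S) (hT : MeasurableSet T) {g : β → E}
    (hg : AEStronglyMeasurable g (μ.map Y)) :
    ∫ ω in Y ⁻¹' S ∩ Z ⁻¹' T, g (Y ω) ∂μ = μ.real (Z ⁻¹' T) • ∫ ω in Y ⁻¹' S, g (Y ω) ∂μ := by
  have hZY : Indep (MeasurableSpace.comap Z ‹_›) (MeasurableSpace.comap Y ‹_›) μ :=
    (IndepFun_iff_Indep Z Y μ).1 hYZ.symm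
  calc ∫ ω in Y ⁻¹' S ∩ Z ⁻¹' T, g (Y ω) ∂μ
      = ∫ ω in Z ⁻¹' T, S.indicator g (Y ω) ∂μ := by
        rw [Set.inter_comm, ← setIntegral_indicator (hY hS)]
        rfl
    _ = μ.real (Z ⁻¹' T) • ∫ ω, S.indicator g (Y ω) ∂μ :=
        hZY.setIntegral_eq_smul hZ.comap_le hY.aemeasurable ⟨T, hT, rfl⟩ (hg.indicator hS)
    _ = μ.real (Z ⁻¹' T) • ∫ ω in Y ⁻¹' S, g (Y ω) ∂μ := by
        rw [← integral_indicator (hY hS)]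
        rfl

lemma IndepFun.integral_cond_preimage_inter_preimage [IsFiniteMeasure μ] (hYZ : IndepFun Y Z μ)
    (hY : Measurable Y) (hZ : Measurable Z) (hS : MeasurableSet S) (hT : MeasurableSet T)
    (hT₀ : μ (Z ⁻¹' T) ≠ 0) {g : β → E} (hg : AEStronglyMeasurable g (μ.map Y)) :
    ∫ ω, g (Y ω) ∂μ[|Y ⁻¹' S ∩ Z ⁻¹' T] = ∫ ω, g (Y ω) ∂μ[|Y ⁻¹' S] := by
  have hmul : μ.real (Y ⁻¹' S ∩ Z ⁻¹' T) = μ.real (Y ⁻¹' S) * μ.real (Z ⁻¹' T) := by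
    simp only [measureReal_def, hYZ.measure_inter_preimage_eq_mul S T hS hT, ENNReal.toReal_mul]
  have hT₀' : μ.real (Z ⁻¹' T) ≠ 0 := (measureReal_ne_zero_iff).2 hT₀
  rw [integral_cond, integral_cond, hYZ.setIntegral_preimage_inter_preimage hY hZ hS hT hg,
    smul_smul, hmul, mul_inv, mul_assoc, inv_mul_cancel₀ hT₀', mul_one]

end ProbabilityTheory

lemma setOf_treatment_eq_zero_and_instrument_eq_one_ae_eq {Ω : Type*} [MeasurableSpace Ω]
    {μ : Measure Ω} {Z D0 D1 D : Ω → ℝ} (hD0 : ∀ ω, 0 ≤ D0 ω) (hmono : ∀ᵐ ω ∂μ, D0 ω ≤ D1 ω)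
    (hD : ∀ ω, D ω = Z ω * D1 ω + (1 - Z ω) * D0 ω) :
    {ω | D ω = 0 ∧ Z ω = 1} =ᵐ[μ] ({ω | D0 ω = 0 ∧ D1 ω = 0} ∩ {ω | Z ω = 1} : Set Ω) := by
  rw [Filter.eventuallyEq_set]
  filter_upwards [hmono] with ω hω
  simp only [Set.mem_ofPred_eq, Set.mem_inter_iff, hD]
  constructor
  · rintro ⟨hD1, hZ1⟩
    rw [hZ1, one_mul, sub_self, zero_mul, add_zero] at hD1
    exact ⟨⟨le_antisymm (hD1 ▸ hω) (hD0 ω), hD1⟩, hZ1⟩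
  · rintro ⟨⟨hD0, hD1⟩, hZ1⟩
    simp [hD0, hD1, hZ1]

theorem profiling_observable_never_takers_general
    {Ω : Type*} [MeasurableSpace Ω] (μ : Measure Ω) [IsProbabilityMeasure μ]
    (Z D0 D1 X : Ω → ℝ)
    (hZ : Measurable Z) (hD0 : Measurable D0) (hD1 : Measurable D1) (hX : Measurable X)
    (hD0bin : ∀ ω, D0 ω = 0 ∨ D0 ω = 1)
    (hindep : IndepFun (fun ω => (X ω, D0 ω, D1 ω)) Z μ)
    (hZ1pos : 0 < μ {ω | Z ω = 1})
    (hmono : ∀ᵐ ω ∂μ, D0 ω ≤ D1 ω)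
    (D : Ω → ℝ) (hD : ∀ ω, D ω = Z ω * D1 ω + (1 - Z ω) * D0 ω) :
    ∫ ω, X ω ∂(μ[|{ω | D ω = 0 ∧ Z ω = 1}]) =
      ∫ ω, X ω ∂(μ[|{ω | D0 ω = 0 ∧ D1 ω = 0}]) := by
  have hD0nonneg : ∀ ω, 0 ≤ D0 ω := fun ω ↦ by rcases hD0bin ω with h | h <;> simp [h]
  have hNeverTakers : MeasurableSet {p : ℝ × ℝ × ℝ | p.2.1 = 0 ∧ p.2.2 = 0} := by measurability
  rw [cond_congr_set (setOf_treatment_eq_zero_and_instrument_eq_one_ae_eq hD0nonneg hmono hD)]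
  exact hindep.integral_cond_preimage_inter_preimage (hX.prodMk (hD0.prodMk hD1)) hZ hNeverTakers
    (measurableSet_singleton 1) hZ1pos.ne' measurable_fst.aestronglyMeasurable

/-- If (X, D(0), D(1)) is independent of Z, P(Z=1) > 0, and monotonicity holds (D(1) ≥ D(0) a.s.),
then E[X | D = 0, Z = 1] = E[X | D(0) = D(1) = 0], provided P(D(0)=D(1)=0) > 0 and X is
integrable. -/
theorem profiling_observable_never_takers
    {Ω : Type*} [MeasurableSpace Ω] (μ : Measure Ω) [IsProbabilityMeasure μ]
    (Z D0 D1 X : Ω → ℝ)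
    (hZ : Measurable Z) (hD0 : Measurable D0) (hD1 : Measurable D1) (hX : Measurable X)
    (hZbin : ∀ ω, Z ω = 0 ∨ Z ω = 1)
    (hD0bin : ∀ ω, D0 ω = 0 ∨ D0 ω = 1) (hD1bin : ∀ ω, D1 ω = 0 ∨ D1 ω = 1)
    (hindep : IndepFun (fun ω => (X ω, D0 ω, D1 ω)) Z μ)
    (hZ1pos : 0 < μ {ω | Z ω = 1})
    (hmono : ∀ᵐ ω ∂μ, D0 ω ≤ D1 ω)
    (hNTpos : 0 < μ {ω | D0 ω = 0 ∧ D1 ω = 0})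
    (hXint : Integrable X μ)
    (D : Ω → ℝ) (hD : ∀ ω, D ω = Z ω * D1 ω + (1 - Z ω) * D0 ω) :
    ∫ ω, X ω ∂(μ[|{ω | D ω = 0 ∧ Z ω = 1}]) =
      ∫ ω, X ω ∂(μ[|{ω | D0 ω = 0 ∧ D1 ω = 0}]) :=
  profiling_observable_never_takers_general μ Z D0 D1 X hZ hD0 hD1 hX hD0bin hindep hZ1pos hmono D
    hD
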